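/- arXiv:1604.05237 — 2 statements merged into one kernel-verified Lean document; each statement's English description precedes it below -/
import Mathlib

section
/- Let λ be a real number with 0 < λ < π, and for each natural number k ≥ 0 let N(k) denote the number of integers j with 1 ≤ j ≤ 2k such that λ ≤ 2πj/(2k+1) ≤ 2π − λ. If for every positive integer l the set {k : N(k) = 2l} has exactly two elements, then λ = π/2. -/
/-!
With `c = λ/2π`, the admissible `j` are the integers in `[c(2k+1), (1-c)(2k+1)]`, a window
symmetric under `j ↦ 2k+1-j`, so `N k = 2 g k` where `g k = halfCount c k = k + 1 - ⌈c(2k+1)⌉`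
counts those `j ≤ k`. As `0 < 2c < 1`, `g` is monotone with steps of size at most one, so if every
positive value of `g` is taken exactly twice, the values come in consecutive pairs:
`g (a + 2n) = n + 1` for some `a`. This says `⌈c(2a+4n+1)⌉ = a + n` for all `n`, which forces
`4c = 1`.
-/

open Real

theorem eq_zero_of_forall_abs_natCast_mul_le {K : Type*} [Field K] [LinearOrder K]
    [IsStrictOrderedRing K] [Archimedean K] {x C : K} (h : ∀ n : ℕ, |n * x| ≤ C) : x = 0 := by
  by_contra hx
  obtain ⟨n, hn⟩ := exists_nat_gt (C / |x|)
  rw [div_lt_iff₀ (abs_pos.mpr hx)] at hn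
  have := h n
  rw [abs_mul, Nat.abs_cast] at this
  linarith

theorem ncard_setOf_le_natCast_le_sub {K : Type*} [Field K] [LinearOrder K]
    [IsStrictOrderedRing K] [FloorSemiring K] (n : ℕ) {x : K} (hx : 0 ≤ x) :
    {j : ℕ | x ≤ j ∧ (j : K) ≤ n - x}.ncard = n + 1 - 2 * ⌈x⌉₊ := by
  have hset : {j : ℕ | x ≤ j ∧ (j : K) ≤ n - x} = Finset.Icc ⌈x⌉₊ (n - ⌈x⌉₊) := by
    ext j
    have hupper : (j : K) ≤ n - x ↔ ⌈x⌉₊ + j ≤ n := by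
      rw [le_sub_iff_add_le', ← Nat.ceil_add_natCast hx, Nat.ceil_le]
    simp only [Set.mem_ofPred_eq, Finset.coe_Icc, Set.mem_Icc, hupper, ← Nat.ceil_le]
    omega
  rw [hset, Set.ncard_coe_finset, Nat.card_Icc]
  omega

theorem Monotone.exists_eq_pair_of_ncard_setOf_eq_two {β : Type*} [PartialOrder β] {g : ℕ → β}
    (hg : Monotone g) {b : β} (h : {k | g k = b}.ncard = 2) : ∃ a, {k | g k = b} = {a, a + 1} := by
  obtain ⟨x, y, hxy, hS⟩ := Set.ncard_eq_two.mp h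
  wlog hlt : x < y generalizing x y
  · exact this y x hxy.symm (by rw [hS, Set.pair_comm]) (hxy.lt_or_gt.resolve_left hlt)
  have hx : x ∈ {k | g k = b} := by rw [hS]; simp
  have hy : y ∈ {k | g k = b} := by rw [hS]; simp
  have hsucc : x + 1 ∈ {k | g k = b} :=
    le_antisymm (hy ▸ hg (Nat.succ_le_of_lt hlt)) (hx ▸ hg (Nat.le_succ x))
  rw [hS] at hsucc
  obtain hsucc | hsucc := hsucc
  · omega
  · exact ⟨x, by rw [hS, ← Set.mem_singleton_iff.mp hsucc]⟩

theorem exists_forall_eq_of_ncard_setOf_eq_two {g : ℕ → ℕ} (hmono : Monotone g)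
    (hstep : ∀ k, g (k + 1) ≤ g k + 1) (htwo : ∀ n, {k | g k = n + 1}.ncard = 2) :
    ∃ a, ∀ n, g (a + 2 * n) = n + 1 := by
  obtain ⟨a, ha⟩ := hmono.exists_eq_pair_of_ncard_setOf_eq_two (htwo 0)
  suffices hlevel : ∀ n, {k | g k = n + 1} = {a + 2 * n, a + 2 * n + 1} by
    refine ⟨a, fun n => ?_⟩
    have : a + 2 * n ∈ {k | g k = n + 1} := by rw [hlevel]; exact Set.mem_insert _ _
    exact this
  intro n
  induction n with
  | zero => simpa using ha
  | succ n ih =>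
    obtain ⟨b, hb⟩ := hmono.exists_eq_pair_of_ncard_setOf_eq_two (htwo (n + 1))
    have hlast : g (a + 2 * n + 1) = n + 1 := by
      have : a + 2 * n + 1 ∈ {k | g k = n + 1} := by rw [ih]; simp
      exact this
    have hnext : g (a + 2 * n + 2) = n + 2 := by
      have hne : g (a + 2 * n + 2) ≠ n + 1 := fun h => by
        have : a + 2 * n + 2 ∈ {k | g k = n + 1} := h
        rw [ih] at this
        simp at this
      have hge : g (a + 2 * n + 1) ≤ g (a + 2 * n + 2) := hmono (by omega)
      have hle : g (a + 2 * n + 2) ≤ g (a + 2 * n + 1) + 1 := hstep _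
      omega
    have hmem : a + 2 * n + 2 ∈ {k | g k = n + 1 + 1} := hnext
    rw [hb] at hmem
    have hb' : b = a + 2 * (n + 1) := by
      rcases hmem with h | h
      · omega
      · have : g b = n + 1 + 1 := by
          have : b ∈ {k | g k = n + 1 + 1} := by rw [hb]; exact Set.mem_insert _ _
          exact this
        simp only [Set.mem_singleton_iff] at h
        rw [show b = a + 2 * n + 1 by omega, hlast] at this
        omega
    rw [hb, hb']

noncomputable def halfCount (c : ℝ) (k : ℕ) : ℕ := k + 1 - ⌈c * (2 * k + 1)⌉₊

theorem halfCount_monotone {c : ℝ} (hc0 : 0 ≤ c) (hc : 2 * c ≤ 1) : Monotone (halfCount c) := by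
  refine monotone_nat_of_le_succ fun k => ?_
  have : ⌈c * (2 * (k + 1 : ℕ) + 1)⌉₊ ≤ ⌈c * (2 * k + 1)⌉₊ + 1 := by
    rw [← Nat.ceil_add_one (by positivity)]
    exact Nat.ceil_mono (by push_cast; linarith)
  unfold halfCount
  omega

theorem halfCount_succ_le {c : ℝ} (hc0 : 0 ≤ c) (k : ℕ) :
    halfCount c (k + 1) ≤ halfCount c k + 1 := by
  have : ⌈c * (2 * k + 1)⌉₊ ≤ ⌈c * (2 * (k + 1 : ℕ) + 1)⌉₊ :=
    Nat.ceil_mono (by push_cast; nlinarith)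
  unfold halfCount
  omega

theorem eq_one_fourth_of_forall_halfCount_eq {c : ℝ} (hc0 : 0 ≤ c) {a : ℕ}
    (h : ∀ n, halfCount c (a + 2 * n) = n + 1) : c = 1 / 4 := by
  have hceil : ∀ n : ℕ, ⌈c * (2 * (a + 2 * n : ℕ) + 1)⌉₊ = a + n := fun n => by
    have := h n
    unfold halfCount at this
    omega
  have hbounds : ∀ n : ℕ, (a + n : ℝ) - 1 < c * (2 * a + 4 * n + 1) ∧
      c * (2 * a + 4 * n + 1) ≤ a + n := fun n => by
    have hle := Nat.le_ceil (c * (2 * (a + 2 * n : ℕ) + 1))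
    have hlt := Nat.ceil_lt_add_one (show 0 ≤ c * (2 * (a + 2 * n : ℕ) + 1) by positivity)
    rw [hceil] at hle hlt
    push_cast at hle hlt
    constructor <;> linarith
  have : 4 * c - 1 = 0 := by
    refine eq_zero_of_forall_abs_natCast_mul_le (C := 1) fun n => ?_
    obtain ⟨h0l, h0u⟩ := hbounds 0
    obtain ⟨hnl, hnu⟩ := hbounds n
    push_cast at h0l h0u
    rw [abs_le]
    constructor <;> linarith
  linarith

theorem natCard_window_eq_two_mul_halfCount {lam : ℝ} (hlam0 : 0 < lam) (k : ℕ) :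
    Nat.card {j : ℕ // 1 ≤ j ∧ j ≤ 2 * k ∧ lam ≤ 2 * π * j / (2 * k + 1) ∧
      2 * π * j / (2 * k + 1) ≤ 2 * π - lam} = 2 * halfCount (lam / (2 * π)) k := by
  set c := lam / (2 * π)
  have h2pi : 0 < 2 * π := by positivity
  have hlam : lam = 2 * π * c := (mul_div_cancel₀ lam h2pi.ne').symm
  have hc0 : 0 < c := by positivity
  have hden : (0 : ℝ) < 2 * k + 1 := by positivity
  set x := c * (2 * k + 1)
  have hwindow : ∀ j : ℕ, (1 ≤ j ∧ j ≤ 2 * k ∧ lam ≤ 2 * π * j / (2 * k + 1) ∧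
      2 * π * j / (2 * k + 1) ≤ 2 * π - lam) ↔ x ≤ j ∧ (j : ℝ) ≤ (2 * k + 1 : ℕ) - x := by
    intro j
    rw [hlam, mul_div_assoc, ← mul_one_sub, mul_le_mul_iff_right₀ h2pi,
      mul_le_mul_iff_right₀ h2pi, le_div_iff₀ hden, div_le_iff₀ hden]
    push_cast
    constructor
    · rintro ⟨-, -, hlow, hupp⟩
      constructor <;> linarith
    · rintro ⟨hlow, hupp⟩
      have hj0 : (0 : ℝ) < j := (mul_pos hc0 hden).trans_le hlow
      have hjk : (j : ℝ) < 2 * k + 1 := by linarith [mul_pos hc0 hden]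
      refine ⟨?_, ?_, by linarith, by linarith⟩
      · exact_mod_cast hj0
      · exact Nat.lt_succ_iff.mp (by exact_mod_cast hjk)
  rw [Nat.card_congr (Equiv.subtypeEquivRight hwindow)]
  refine (Nat.card_coe_set_eq {j : ℕ | x ≤ j ∧ (j : ℝ) ≤ (2 * k + 1 : ℕ) - x}).trans ?_
  rw [ncard_setOf_le_natCast_le_sub _ (by positivity)]
  change _ = 2 * (k + 1 - ⌈x⌉₊)
  omega

/-- For `0 < λ < π`, let `N k` be the number of integers `1 ≤ j ≤ 2k` with
`λ ≤ 2πj/(2k+1) ≤ 2π − λ`.  If for every positive integer `l` the set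
`{k : N k = 2l}` has exactly two elements, then `λ = π/2`. -/
theorem stmt_2 (lam : ℝ) (hlam0 : 0 < lam) (hlampi : lam < Real.pi)
    (N : ℕ → ℕ)
    (hN : ∀ k : ℕ, N k = Nat.card {j : ℕ // 1 ≤ j ∧ j ≤ 2 * k ∧
      lam ≤ 2 * Real.pi * j / (2 * k + 1) ∧
      2 * Real.pi * j / (2 * k + 1) ≤ 2 * Real.pi - lam})
    (htwo : ∀ l : ℕ, 1 ≤ l → {k : ℕ | N k = 2 * l}.ncard = 2) :
    lam = Real.pi / 2 := by
  have hNc k : N k = 2 * halfCount (lam / (2 * π)) k :=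
    (hN k).trans (natCard_window_eq_two_mul_halfCount hlam0 k)
  set c := lam / (2 * π)
  have hc0 : 0 ≤ c := by positivity
  have hc : 2 * c ≤ 1 := by
    rw [mul_div_assoc', div_le_one (by positivity)]
    linarith
  have hlevel : ∀ n, {k | halfCount c k = n + 1}.ncard = 2 := fun n => by
    rw [← htwo (n + 1) (by omega)]
    congr 1
    ext k
    rw [Set.mem_ofPred_eq, Set.mem_ofPred_eq, hNc]
    omega
  obtain ⟨a, ha⟩ := exists_forall_eq_of_ncard_setOf_eq_two (halfCount_monotone hc0 hc)
    (halfCount_succ_le hc0) hlevel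
  have hquarter : c = 1 / 4 := eq_one_fourth_of_forall_halfCount_eq hc0 ha
  calc lam = 2 * π * c := (mul_div_cancel₀ lam (by positivity)).symm
    _ = π / 2 := by rw [hquarter]; ring
end

section
/- Let λ ∈ (0, π) with λ ≠ π/2. Then there exists a positive even integer 2l such that the number of positive integers k with card{j : 1 ≤ j ≤ 2k, λ ≤ 2πj/(2k+1) ≤ 2π−λ} = 2l is not equal to 2. -/
/-!
Write `c k = ⌈λ(2k+1)/2π⌉`. The points `2πj/(2k+1)` lying in `[λ, 2π - λ]` are exactly the
`j ∈ [c k, 2k+1 - c k]`, so the count is `2 f k` with `f k = k + 1 - c k` (`halfIndex`).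
As `0 < λ < π`, the function `f` is monotone and rises by at most one at each step. If every
`l ≥ 1` were attained by `f` at exactly two positive arguments, `f` would climb by one every two
steps: `f (a + 2n) = n + 1`. Then `c (a + 2n) = a + n`, so `λ(2a + 4n + 1)/2π` stays within
distance one of `a + n` for all `n`, forcing `4λ/2π = 1`, i.e. `λ = π/2`.
-/

open Real

lemma ncard_setOf_le_and_add_le {x : ℝ} (hx : 0 ≤ x) (m : ℕ) :
    {j : ℕ | x ≤ j ∧ x + j ≤ m}.ncard = m + 1 - 2 * ⌈x⌉₊ := by
  have hset : {j : ℕ | x ≤ j ∧ x + j ≤ m} = ↑(Finset.Icc ⌈x⌉₊ (m - ⌈x⌉₊)) := by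
    ext j
    rw [Finset.coe_Icc, Set.mem_Icc, Set.mem_ofPred_eq, ← Nat.ceil_le, ← Nat.ceil_le,
      Nat.ceil_add_natCast hx]
    omega
  rw [hset, Set.ncard_coe_finset, Nat.card_Icc]
  omega

lemma eq_zero_of_forall_abs_mul_add_le {r c B : ℝ} (h : ∀ n : ℕ, |r * n + c| ≤ B) : r = 0 := by
  by_contra hr
  obtain ⟨n, hn⟩ := exists_nat_gt ((B + |c|) / |r|)
  have hmul : B + |c| < |r| * n := by rwa [div_lt_iff₀' (abs_pos.mpr hr)] at hn
  have hle : |r * n| ≤ B + |c| := by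
    calc |r * n| = |(r * n + c) - c| := by ring_nf
      _ ≤ |r * n + c| + |c| := abs_sub _ _
      _ ≤ B + |c| := by linarith [h n]
  rw [abs_mul, Nat.abs_cast] at hle
  linarith

section Fibers

variable {f : ℕ → ℕ}

lemma not_three_lt_of_ncard_fiber_eq_two {l : ℕ} (hfib : {k | 0 < k ∧ f k = l}.ncard = 2)
    {x y z : ℕ} (hx : 0 < x) (hxy : x < y) (hyz : y < z) (hfx : f x = l) (hfy : f y = l) :
    f z ≠ l := by
  intro hfz
  have hsub : {x, y, z} ⊆ {k | 0 < k ∧ f k = l} := by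
    rintro k (rfl | rfl | rfl) <;> exact ⟨by omega, ‹_›⟩
  have h3 : ({x, y, z} : Set ℕ).ncard = 3 :=
    Set.ncard_eq_three.mpr ⟨x, y, z, hxy.ne, (hxy.trans hyz).ne, hyz.ne, rfl⟩
  have := Set.ncard_le_ncard hsub (Set.finite_of_ncard_ne_zero (by omega))
  omega

lemma exists_consecutive_of_ncard_fiber_eq_two (hmono : Monotone f) {l : ℕ}
    (hfib : {k | 0 < k ∧ f k = l}.ncard = 2) : ∃ b, 0 < b ∧ f b = l ∧ f (b + 1) = l := by
  obtain ⟨x, hx⟩ := Set.nonempty_of_ncard_ne_zero (s := {k | 0 < k ∧ f k = l}) (by omega)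
  obtain ⟨y, hy, hyx⟩ := Set.exists_ne_of_one_lt_ncard (s := {k | 0 < k ∧ f k = l}) (by omega) x
  have squeeze : ∀ {u v}, u < v → 0 < u ∧ f u = l → f v = l → f (u + 1) = l := fun huv hu hv =>
    le_antisymm (hv ▸ hmono huv) (hu.2 ▸ hmono (Nat.le_succ _))
  rcases lt_or_gt_of_ne hyx with h | h
  · exact ⟨y, hy.1, hy.2, squeeze h hy hx.2⟩
  · exact ⟨x, hx.1, hx.2, squeeze h hx hy.2⟩

lemma exists_forall_add_two_mul_eq_of_ncard_fiber_eq_two (hmono : Monotone f)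
    (hstep : ∀ k, f (k + 1) ≤ f k + 1) (hfib : ∀ l, 1 ≤ l → {k | 0 < k ∧ f k = l}.ncard = 2) :
    ∃ a, ∀ n, f (a + 2 * n) = n + 1 := by
  obtain ⟨a, ha, hfa, hfa'⟩ := exists_consecutive_of_ncard_fiber_eq_two hmono (hfib 1 le_rfl)
  suffices h : ∀ n, f (a + 2 * n) = n + 1 ∧ f (a + 2 * n + 1) = n + 1 from ⟨a, fun n => (h n).1⟩
  intro n
  induction n with
  | zero => exact ⟨hfa, hfa'⟩
  | succ n ih =>
    have heven : f (a + 2 * n + 2) = n + 2 := by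
      have hne := not_three_lt_of_ncard_fiber_eq_two (hfib (n + 1) (by omega))
        (by omega : 0 < a + 2 * n) (by omega : a + 2 * n < a + 2 * n + 1)
        (by omega : a + 2 * n + 1 < a + 2 * n + 2) ih.1 ih.2
      have := hmono (by omega : a + 2 * n + 1 ≤ a + 2 * n + 2)
      have : f (a + 2 * n + 2) ≤ f (a + 2 * n + 1) + 1 := hstep _
      omega
    obtain ⟨b, -, hfb, hfb'⟩ :=
      exists_consecutive_of_ncard_fiber_eq_two hmono (hfib (n + 2) (by omega))
    have hb : a + 2 * n + 1 < b := hmono.reflect_lt (by omega)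
    have hodd : f (a + 2 * n + 3) = n + 2 :=
      le_antisymm (hfb' ▸ hmono (by omega)) (heven ▸ hmono (Nat.le_succ _))
    exact ⟨by rw [← heven]; ring_nf, by rw [← hodd]; ring_nf⟩

end Fibers

section OddIterates

variable {lam : ℝ}

noncomputable def arcCount (lam : ℝ) (k : ℕ) : ℕ :=
  Nat.card {j : ℕ // 1 ≤ j ∧ j ≤ 2 * k ∧
    lam ≤ 2 * π * j / (2 * k + 1) ∧ 2 * π * j / (2 * k + 1) ≤ 2 * π - lam}

noncomputable def halfIndex (lam : ℝ) (k : ℕ) : ℕ :=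
  k + 1 - ⌈lam * (2 * k + 1) / (2 * π)⌉₊

lemma arcCount_eq_two_mul_halfIndex (h0 : 0 < lam) (k : ℕ) :
    arcCount lam k = 2 * halfIndex lam k := by
  set x := lam * (2 * k + 1) / (2 * π)
  have hx : 0 < x := by positivity
  have hset : {j : ℕ | 1 ≤ j ∧ j ≤ 2 * k ∧
      lam ≤ 2 * π * j / (2 * k + 1) ∧ 2 * π * j / (2 * k + 1) ≤ 2 * π - lam} =
      {j : ℕ | x ≤ j ∧ x + j ≤ (2 * k + 1 : ℕ)} := by
    ext j
    have hleft : lam ≤ 2 * π * j / (2 * k + 1) ↔ x ≤ j := by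
      rw [le_div_iff₀ (by positivity), div_le_iff₀ (by positivity)]
      constructor <;> intro h <;> linarith
    have hright : 2 * π * j / (2 * k + 1) ≤ 2 * π - lam ↔ x + j ≤ (2 * k + 1 : ℕ) := by
      rw [div_le_iff₀ (by positivity), ← le_sub_iff_add_le, div_le_iff₀ (by positivity)]
      push_cast
      constructor <;> intro h <;> linarith
    simp only [Set.mem_ofPred_eq, hleft, hright]
    refine ⟨fun h => h.2.2, fun h => ⟨?_, ?_, h⟩⟩
    · exact_mod_cast (show (0 : ℝ) < j by linarith)
    · have : (j : ℝ) < 2 * k + 1 := by push_cast at h; linarith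
      exact Nat.le_of_lt_succ (by exact_mod_cast this)
  rw [arcCount, ← Set.coe_ofPred, Nat.card_coe_set_eq, hset, ncard_setOf_le_and_add_le hx.le]
  change _ = 2 * (k + 1 - ⌈x⌉₊)
  omega

lemma mul_odd_succ_div_two_pi (k : ℕ) :
    lam * (2 * ((k + 1 : ℕ) : ℝ) + 1) / (2 * π) = lam * (2 * k + 1) / (2 * π) + lam / π := by
  field_simp
  push_cast
  ring

lemma halfIndex_succ_le (h0 : 0 ≤ lam) (k : ℕ) :
    halfIndex lam (k + 1) ≤ halfIndex lam k + 1 := by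
  have : ⌈lam * (2 * k + 1) / (2 * π)⌉₊ ≤ ⌈lam * (2 * ((k + 1 : ℕ) : ℝ) + 1) / (2 * π)⌉₊ :=
    Nat.ceil_mono (by rw [mul_odd_succ_div_two_pi]; linarith [div_nonneg h0 pi_pos.le])
  unfold halfIndex
  omega

lemma halfIndex_monotone (hπ : lam ≤ π) : Monotone (halfIndex lam) := by
  refine monotone_nat_of_le_succ fun k => ?_
  have : ⌈lam * (2 * ((k + 1 : ℕ) : ℝ) + 1) / (2 * π)⌉₊ ≤ ⌈lam * (2 * k + 1) / (2 * π)⌉₊ + 1 := by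
    rw [Nat.ceil_le, mul_odd_succ_div_two_pi]
    push_cast
    linarith [Nat.le_ceil (lam * (2 * k + 1) / (2 * π)), (div_le_one pi_pos).mpr hπ]
  unfold halfIndex
  omega

lemma eq_pi_div_two_of_halfIndex_add_two_mul (h0 : 0 ≤ lam) {a : ℕ}
    (h : ∀ n, halfIndex lam (a + 2 * n) = n + 1) : lam = π / 2 := by
  suffices hr : 2 * lam / π - 1 = 0 by
    field_simp at hr
    linarith
  refine eq_zero_of_forall_abs_mul_add_le (c := lam * (2 * a + 1) / (2 * π) - a) (B := 1)
    fun n => ?_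
  set y := lam * (2 * ((a + 2 * n : ℕ) : ℝ) + 1) / (2 * π)
  have hceil : ⌈y⌉₊ = a + n := by
    have hdef : halfIndex lam (a + 2 * n) = a + 2 * n + 1 - ⌈y⌉₊ := rfl
    have := h n
    omega
  have hy : y - (a + n) = (2 * lam / π - 1) * n + (lam * (2 * a + 1) / (2 * π) - a) := by
    simp only [y]
    field_simp
    push_cast
    ring
  have hlo := Nat.le_ceil y
  have hhi := Nat.ceil_lt_add_one (show 0 ≤ y by positivity)
  rw [hceil] at hlo hhi
  push_cast at hlo hhi
  rw [← hy, abs_sub_le_iff]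
  constructor <;> linarith

end OddIterates

/-- If `λ ∈ (0, π)` and `λ ≠ π/2`, then there is a positive even integer `2l` such that
the number of positive integers `k` with
`card {j : 1 ≤ j ≤ 2k, λ ≤ 2πj/(2k+1) ≤ 2π − λ} = 2l` is not equal to `2`. -/
theorem stmt_14 (lam : ℝ) (hlam0 : 0 < lam) (hlampi : lam < Real.pi)
    (hne : lam ≠ Real.pi / 2) :
    ∃ l : ℕ, 1 ≤ l ∧
      {k : ℕ | 0 < k ∧ Nat.card {j : ℕ // 1 ≤ j ∧ j ≤ 2 * k ∧
        lam ≤ 2 * Real.pi * j / (2 * k + 1) ∧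
        2 * Real.pi * j / (2 * k + 1) ≤ 2 * Real.pi - lam} = 2 * l}.ncard ≠ 2 := by
  by_contra! hall
  have hfib : ∀ l, 1 ≤ l → {k | 0 < k ∧ halfIndex lam k = l}.ncard = 2 := fun l hl => by
    have h := hall l hl
    change {k : ℕ | 0 < k ∧ arcCount lam k = 2 * l}.ncard = 2 at h
    simpa only [arcCount_eq_two_mul_halfIndex hlam0, Nat.mul_left_cancel_iff two_pos] using h
  obtain ⟨a, ha⟩ := exists_forall_add_two_mul_eq_of_ncard_fiber_eq_two
    (halfIndex_monotone hlampi.le) (halfIndex_succ_le hlam0.le) hfib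
  exact hne (eq_pi_div_two_of_halfIndex_add_two_mul hlam0.le ha)
end
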